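/- arXiv:1003.3498 — 2 statements merged into one kernel-verified Lean document; each statement's English description precedes it below -/
import Mathlib

section
/- Fix $\epsilon > 0$ and let $L := \log(1/p)$. Let $E_1$ be the event that there exists a matching $F \subseteq V^{(2)}$ with $|F| > Lnp$ all of whose elements are bad edges of $G(n,p)$. There is a constant $C(\epsilon) > 0$ depending only on $\epsilon$ such that whenever $C(\epsilon)^{-1} n^{-1}\log n \le p \le C(\epsilon)$, $\mathbb{P}(E_1) \le \exp(-C(\epsilon) n^2 p^2 \log(1/p))$. -/
open MeasureTheory ProbabilityTheory Real
open scoped Classical ENNReal NNReal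

/-- The Erdős–Rényi random graph measure: each (non-diagonal) unordered pair of vertices of
`Fin n` is an edge independently with probability `p`. The sample space records, for each
unordered pair, whether it is an edge. -/
noncomputable def erMeasure (n : ℕ) (p : ℝ≥0) (hp : p ≤ 1) :
    Measure (Sym2 (Fin n) → Bool) :=
  Measure.pi fun _ => (PMF.bernoulli p hp).toMeasure

/-- Adjacency in the realization `ω`. -/
def Adj {n : ℕ} (ω : Sym2 (Fin n) → Bool) (u v : Fin n) : Prop :=
  u ≠ v ∧ ω s(u, v) = true

/-- The degree of a vertex. -/
noncomputable def deg {n : ℕ} (ω : Sym2 (Fin n) → Bool) (u : Fin n) : ℕ :=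
  (Finset.univ.filter (fun v => Adj ω u v)).card

/-- `t` is a triangle: a set of three pairwise adjacent vertices. -/
def IsTriangle {n : ℕ} (ω : Sym2 (Fin n) → Bool) (t : Finset (Fin n)) : Prop :=
  t.card = 3 ∧ ∀ u ∈ t, ∀ v ∈ t, u ≠ v → Adj ω u v

/-- The number of triangles. -/
noncomputable def triangleCount {n : ℕ} (ω : Sym2 (Fin n) → Bool) : ℕ :=
  (Finset.univ.filter (fun t : Finset (Fin n) => IsTriangle ω t)).card

/-- `e` is an edge of the graph. -/
def IsEdge {n : ℕ} (ω : Sym2 (Fin n) → Bool) (e : Sym2 (Fin n)) : Prop :=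
  ¬ e.IsDiag ∧ ω e = true

/-- The number of triangles containing both endpoints of `e`. -/
noncomputable def triOnEdge {n : ℕ} (ω : Sym2 (Fin n) → Bool) (e : Sym2 (Fin n)) : ℕ :=
  (Finset.univ.filter (fun t : Finset (Fin n) => IsTriangle ω t ∧ ∀ u ∈ e, u ∈ t)).card

/-- A good edge: an edge of the graph contained in fewer than `ε ℓ n p` triangles,
where `ℓ = 1 / log(1/p)`. -/
def GoodEdge {n : ℕ} (ε p : ℝ) (ω : Sym2 (Fin n) → Bool) (e : Sym2 (Fin n)) : Prop :=
  IsEdge ω e ∧ (triOnEdge ω e : ℝ) < ε * (1 / Real.log (1 / p)) * n * p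

/-- A bad edge: an edge of the graph that is not good. -/
def BadEdge {n : ℕ} (ε p : ℝ) (ω : Sym2 (Fin n) → Bool) (e : Sym2 (Fin n)) : Prop :=
  IsEdge ω e ∧ ¬ ((triOnEdge ω e : ℝ) < ε * (1 / Real.log (1 / p)) * n * p)

/-- A good vertex: one with fewer than `7np` neighbors. -/
def GoodVertex {n : ℕ} (p : ℝ) (ω : Sym2 (Fin n) → Bool) (u : Fin n) : Prop :=
  (deg ω u : ℝ) < 7 * n * p

/-- `T'`: the number of triangles all of whose edges are good. -/
noncomputable def triGoodEdges {n : ℕ} (ε p : ℝ) (ω : Sym2 (Fin n) → Bool) : ℕ :=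
  (Finset.univ.filter (fun t : Finset (Fin n) => IsTriangle ω t ∧
    ∀ u ∈ t, ∀ v ∈ t, u ≠ v → GoodEdge ε p ω s(u, v))).card

/-- `T₀`: the number of triangles with at least one bad edge but all good vertices. -/
noncomputable def triBadEdgeGoodVerts {n : ℕ} (ε p : ℝ) (ω : Sym2 (Fin n) → Bool) : ℕ :=
  (Finset.univ.filter (fun t : Finset (Fin n) => IsTriangle ω t ∧
    (∃ u ∈ t, ∃ v ∈ t, u ≠ v ∧ BadEdge ε p ω s(u, v)) ∧
    ∀ u ∈ t, GoodVertex p ω u)).card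

/-- The number of triangles with exactly `k` bad vertices. -/
noncomputable def triBadVerts {n : ℕ} (p : ℝ) (k : ℕ) (ω : Sym2 (Fin n) → Bool) : ℕ :=
  (Finset.univ.filter (fun t : Finset (Fin n) => IsTriangle ω t ∧
    (t.filter (fun u => ¬ GoodVertex p ω u)).card = k)).card

/-- `t_{uv}` for `e = {u,v}`: the number of common neighbors of `u` and `v` outside `{u,v}`. -/
noncomputable def commonNbrs {n : ℕ} (ω : Sym2 (Fin n) → Bool) (e : Sym2 (Fin n)) : ℕ :=
  (Finset.univ.filter (fun w => w ∉ e ∧ ∀ u ∈ e, Adj ω u w)).card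

/-- A matching: a collection of non-diagonal unordered pairs, no two of which share a vertex. -/
def IsMatching {n : ℕ} (A : Finset (Sym2 (Fin n))) : Prop :=
  (∀ e ∈ A, ¬ e.IsDiag) ∧ ∀ e ∈ A, ∀ f ∈ A, e ≠ f → ∀ v : Fin n, v ∈ e → v ∉ f

/-!
Put `L = log (1/p)`, `m = ⌊L n p⌋ + 1` and `K = ⌈ε n p / L⌉`. A bad edge `e = uv` has at least
`K` common neighbours `w`, each giving a cherry `{uw, vw}` of present edges. For a matching `A`
of `m` bad edges there are at least `m K` such pairs `(e, w)`, so `d ≈ m K / 2` of them have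
their apex `w` all outside, or all inside, the vertex set `V(A)`. Apexes outside `V(A)` give
pairwise disjoint cherries, hence `2d` present edges fixed by `d` choices among `m n`; apexes
inside `V(A)` give at least `d` present edges inside `V(A)`, fixed by `d` choices among `2m²`,
since a pair lies in at most two cherries. A union bound over `A` yields
`n^{2m} (C(mn, d) p^{2d} + C(2m², d) p^d) ≤ n^{2m} p^{d/2}`, and `d L ≳ ε m n p` makes this
`exp (-Ω(n² p² L))`.
-/

open Finset

section Matchings

variable {n : ℕ}

theorem IsMatching.eq_of_mem {A : Finset (Sym2 (Fin n))} (hA : IsMatching A)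
    {e f : Sym2 (Fin n)} (he : e ∈ A) (hf : f ∈ A) {v : Fin n} (hve : v ∈ e) (hvf : v ∈ f) :
    e = f :=
  by_contra fun hne => hA.2 e he f hf hne v hve hvf

theorem IsMatching.subset {A B : Finset (Sym2 (Fin n))} (hB : IsMatching B) (hAB : A ⊆ B) :
    IsMatching A :=
  ⟨fun e he => hB.1 e (hAB he), fun e he f hf => hB.2 e (hAB he) f (hAB hf)⟩

theorem IsMatching.eq_empty_of_lt_two {A : Finset (Sym2 (Fin n))} (hA : IsMatching A)
    (hn : n < 2) : A = ∅ := by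
  have : Subsingleton (Fin n) := Fin.subsingleton_iff_le_one.2 (by omega)
  exact eq_empty_of_forall_notMem fun e he => hA.1 e he e.isDiag_of_subsingleton

def matchingVerts (A : Finset (Sym2 (Fin n))) : Finset (Fin n) :=
  A.biUnion Sym2.toFinset

theorem mem_matchingVerts {A : Finset (Sym2 (Fin n))} {v : Fin n} :
    v ∈ matchingVerts A ↔ ∃ e ∈ A, v ∈ e := by
  simp [matchingVerts]

theorem card_matchingVerts_le (A : Finset (Sym2 (Fin n))) : #(matchingVerts A) ≤ 2 * #A := by
  calc #(matchingVerts A) ≤ ∑ e ∈ A, #e.toFinset := card_biUnion_le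
    _ ≤ ∑ _e ∈ A, 2 := sum_le_sum fun e _ => by rw [Sym2.card_toFinset]; split_ifs <;> omega
    _ = 2 * #A := by rw [sum_const, smul_eq_mul, mul_comm]

def cherry (e : Sym2 (Fin n)) (w : Fin n) : Finset (Sym2 (Fin n)) :=
  e.toFinset.image fun u => s(u, w)

theorem mem_cherry {e x : Sym2 (Fin n)} {w : Fin n} :
    x ∈ cherry e w ↔ ∃ u ∈ e, s(u, w) = x := by
  simp [cherry]

theorem card_cherry {e : Sym2 (Fin n)} (he : ¬ e.IsDiag) (w : Fin n) : #(cherry e w) = 2 := by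
  rw [cherry, card_image_of_injective _ fun u u' h => Sym2.congr_left.1 h,
    Sym2.card_toFinset_of_not_isDiag e he]

def cherries (D : Finset (Sym2 (Fin n) × Fin n)) : Finset (Sym2 (Fin n)) :=
  D.biUnion fun q => cherry q.1 q.2

theorem cherry_subset_cherries {D : Finset (Sym2 (Fin n) × Fin n)} {q : Sym2 (Fin n) × Fin n}
    (hq : q ∈ D) : cherry q.1 q.2 ⊆ cherries D :=
  subset_biUnion_of_mem (fun q => cherry q.1 q.2) hq

theorem card_mul_two_le_card_cherries_mul {A : Finset (Sym2 (Fin n))} (hA : IsMatching A)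
    {D : Finset (Sym2 (Fin n) × Fin n)} (hD : ∀ q ∈ D, q.1 ∈ A) {k : ℕ}
    (hk : ∀ x, #(D.bipartiteBelow (fun q x => x ∈ cherry q.1 q.2) x) ≤ k) :
    #D * 2 ≤ #(cherries D) * k := by
  refine card_mul_le_card_mul (m := 2) (n := k) _ (fun q hq => ?_) fun x _ => hk x
  rw [bipartiteAbove, filter_mem_eq_inter,
    inter_eq_right.2 (cherry_subset_cherries hq), card_cherry (hA.1 _ (hD q hq))]

theorem card_bipartiteBelow_cherry_le_two {A : Finset (Sym2 (Fin n))} (hA : IsMatching A)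
    {D : Finset (Sym2 (Fin n) × Fin n)} (hD : ∀ q ∈ D, q.1 ∈ A) (x : Sym2 (Fin n)) :
    #(D.bipartiteBelow (fun q x => x ∈ cherry q.1 q.2) x) ≤ 2 := by
  refine (card_le_card_of_injOn Prod.snd (t := x.toFinset) (fun q hq => ?_) ?_).trans ?_
  · obtain ⟨u, -, rfl⟩ := mem_cherry.1 (mem_filter.1 hq).2
    simp
  · intro q hq q' hq' hw
    obtain ⟨hqD, hx⟩ := mem_filter.1 (mem_coe.1 hq)
    obtain ⟨hqD', hx'⟩ := mem_filter.1 (mem_coe.1 hq')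
    obtain ⟨u, hu, rfl⟩ := mem_cherry.1 hx
    obtain ⟨u', hu', huu'⟩ := mem_cherry.1 hx'
    rw [← hw, Sym2.congr_left] at huu'
    exact Prod.ext (hA.eq_of_mem (hD _ hqD) (hD _ hqD') hu (huu' ▸ hu')) hw
  · rw [Sym2.card_toFinset]; split_ifs <;> omega

theorem card_bipartiteBelow_cherry_le_one {A : Finset (Sym2 (Fin n))} (hA : IsMatching A)
    {D : Finset (Sym2 (Fin n) × Fin n)} (hD : D ⊆ A ×ˢ (matchingVerts A)ᶜ) (x : Sym2 (Fin n)) :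
    #(D.bipartiteBelow (fun q x => x ∈ cherry q.1 q.2) x) ≤ 1 := by
  refine card_le_one.2 fun q hq q' hq' => ?_
  obtain ⟨hqD, hx⟩ := mem_filter.1 hq
  obtain ⟨hqD', hx'⟩ := mem_filter.1 hq'
  obtain ⟨he, -⟩ := mem_product.1 (hD hqD)
  obtain ⟨he', hw'⟩ := mem_product.1 (hD hqD')
  obtain ⟨u, hu, rfl⟩ := mem_cherry.1 hx
  obtain ⟨u', hu', huu'⟩ := mem_cherry.1 hx'
  rcases Sym2.eq_iff.1 huu'.symm with ⟨rfl, hw⟩ | ⟨rfl, -⟩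
  · exact Prod.ext (hA.eq_of_mem he he' hu hu') hw
  · exact absurd (mem_matchingVerts.2 ⟨q.1, he, hu⟩) (mem_compl.1 hw')

theorem card_le_card_cherries {A : Finset (Sym2 (Fin n))} (hA : IsMatching A)
    {D : Finset (Sym2 (Fin n) × Fin n)} (hD : ∀ q ∈ D, q.1 ∈ A) : #D ≤ #(cherries D) := by
  have := card_mul_two_le_card_cherries_mul hA hD (card_bipartiteBelow_cherry_le_two hA hD)
  omega

theorem two_mul_card_le_card_cherries {A : Finset (Sym2 (Fin n))} (hA : IsMatching A)
    {D : Finset (Sym2 (Fin n) × Fin n)} (hD : D ⊆ A ×ˢ (matchingVerts A)ᶜ) :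
    2 * #D ≤ #(cherries D) := by
  have := card_mul_two_le_card_cherries_mul hA (fun q hq => (mem_product.1 (hD hq)).1)
    (card_bipartiteBelow_cherry_le_one hA hD)
  omega

end Matchings

section Witnesses

variable {n : ℕ} (ω : Sym2 (Fin n) → Bool)

noncomputable def commonNbrFinset (e : Sym2 (Fin n)) : Finset (Fin n) :=
  {w | w ∉ e ∧ ∀ u ∈ e, Adj ω u w}

theorem triOnEdge_le_commonNbrs {e : Sym2 (Fin n)} (he : ¬ e.IsDiag) :
    triOnEdge ω e ≤ commonNbrs ω e := by
  refine (card_le_card fun t ht => ?_).trans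
    (card_image_le (s := commonNbrFinset ω e) (f := fun w => insert w e.toFinset))
  obtain ⟨-, ⟨htcard, hadj⟩, het⟩ := mem_filter.1 ht
  have hsub : e.toFinset ⊆ t := fun u hu => het u (Sym2.mem_toFinset.1 hu)
  obtain ⟨w, hw⟩ : (t \ e.toFinset).Nonempty := by
    rw [← card_pos, card_sdiff_of_subset hsub, htcard, Sym2.card_toFinset_of_not_isDiag e he]
    norm_num
  obtain ⟨hwt, hwe⟩ := mem_sdiff.1 hw
  rw [Sym2.mem_toFinset] at hwe
  refine mem_image.2 ⟨w, mem_filter.2 ⟨mem_univ _, hwe, fun u hu => ?_⟩, ?_⟩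
  · exact hadj u (het u hu) w hwt fun huw => hwe (huw ▸ hu)
  · refine eq_of_subset_of_card_le (insert_subset hwt hsub) ?_
    rw [htcard, card_insert_of_notMem (by simpa using hwe), Sym2.card_toFinset_of_not_isDiag e he]

theorem BadEdge.ceil_le_commonNbrs {ε p : ℝ} {e : Sym2 (Fin n)} (h : BadEdge ε p ω e) :
    ⌈ε * (1 / Real.log (1 / p)) * n * p⌉₊ ≤ commonNbrs ω e :=
  (Nat.ceil_le.2 (not_lt.1 h.2)).trans (triOnEdge_le_commonNbrs ω h.1.1)

def allPresent (S : Finset (Sym2 (Fin n))) : Set (Sym2 (Fin n) → Bool) :=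
  {ω | ∀ x ∈ S, ω x = true}

theorem mem_allPresent_cherries {D : Finset (Sym2 (Fin n) × Fin n)}
    (hD : ∀ q ∈ D, q.2 ∈ commonNbrFinset ω q.1) : ω ∈ allPresent (cherries D) := by
  intro x hx
  obtain ⟨q, hq, hxq⟩ := mem_biUnion.1 hx
  obtain ⟨u, hu, rfl⟩ := mem_cherry.1 hxq
  exact ((mem_filter.1 (hD q hq)).2.2 u hu).2

theorem exists_cherries_of_le_commonNbrs {A : Finset (Sym2 (Fin n))} (V : Finset (Fin n))
    {K d : ℕ} (hK : ∀ e ∈ A, K ≤ commonNbrs ω e) (hd : 2 * d ≤ #A * K + 1) :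
    ∃ D, (D ⊆ A ×ˢ Vᶜ ∨ D ⊆ A ×ˢ V) ∧ #D = d ∧ ω ∈ allPresent (cherries D) := by
  set P := {q ∈ A ×ˢ (univ : Finset (Fin n)) | q.2 ∈ commonNbrFinset ω q.1}
  have hP : #A * K ≤ #P :=
    calc #A * K = ∑ _e ∈ A, K := by rw [sum_const, smul_eq_mul]
      _ ≤ ∑ e ∈ A, #(commonNbrFinset ω e) := sum_le_sum hK
      _ = #P := by
        rw [card_filter, sum_product]
        refine sum_congr rfl fun e _ => ?_
        simp only [← card_filter, filter_mem_eq_inter, univ_inter]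
  have hsplit : #{q ∈ P | q.2 ∈ V} + #{q ∈ P | q.2 ∉ V} = #P :=
    card_filter_add_card_filter_not _
  have hPA : ∀ q ∈ P, q.1 ∈ A := fun q hq => (mem_product.1 (mem_filter.1 hq).1).1
  obtain ⟨D₀, hD₀P, hD₀, hd₀⟩ :
      ∃ D₀ ⊆ P, (D₀ ⊆ A ×ˢ Vᶜ ∨ D₀ ⊆ A ×ˢ V) ∧ d ≤ #D₀ := by
    rcases le_or_gt d #{q ∈ P | q.2 ∉ V} with h | h
    · refine ⟨_, filter_subset _ _, Or.inl fun q hq => ?_, h⟩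
      obtain ⟨hqP, hqV⟩ := mem_filter.1 hq
      exact mem_product.2 ⟨hPA q hqP, mem_compl.2 hqV⟩
    · refine ⟨{q ∈ P | q.2 ∈ V}, filter_subset _ _, Or.inr fun q hq => ?_, by omega⟩
      obtain ⟨hqP, hqV⟩ := mem_filter.1 hq
      exact mem_product.2 ⟨hPA q hqP, hqV⟩
  obtain ⟨D, hDD₀, rfl⟩ := exists_subset_card_eq hd₀
  exact ⟨D, hD₀.imp hDD₀.trans hDD₀.trans, rfl,
    mem_allPresent_cherries ω fun q hq => (mem_filter.1 (hD₀P (hDD₀ hq))).2⟩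

end Witnesses

def cherryCover {n : ℕ} (A : Finset (Sym2 (Fin n))) (d : ℕ) : Set (Sym2 (Fin n) → Bool) :=
  (⋃ D ∈ (A ×ˢ (matchingVerts A)ᶜ).powersetCard d, allPresent (cherries D)) ∪
    ⋃ D ∈ (A ×ˢ matchingVerts A).powersetCard d, allPresent (cherries D)

noncomputable def matchingsOfCard (n m : ℕ) : Finset (Finset (Sym2 (Fin n))) :=
  {A ∈ (univ : Finset (Sym2 (Fin n))).powersetCard m | IsMatching A}

theorem mem_biUnion_cherryCover {n m K d : ℕ} (ω : Sym2 (Fin n) → Bool)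
    {A₀ : Finset (Sym2 (Fin n))} (hA₀ : IsMatching A₀) (hm : m ≤ #A₀)
    (hK : ∀ e ∈ A₀, K ≤ commonNbrs ω e) (hd : 2 * d ≤ m * K + 1) :
    ω ∈ ⋃ A ∈ matchingsOfCard n m, cherryCover A d := by
  obtain ⟨A, hAA₀, rfl⟩ := exists_subset_card_eq hm
  obtain ⟨D, hD, rfl, hω⟩ :=
    exists_cherries_of_le_commonNbrs ω (matchingVerts A) (fun e he => hK e (hAA₀ he)) hd
  simp only [cherryCover, Set.mem_iUnion, Set.mem_union]
  refine ⟨A, mem_filter.2 ⟨mem_powersetCard.2 ⟨subset_univ _, rfl⟩, hA₀.subset hAA₀⟩, ?_⟩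
  exact hD.imp (fun h => ⟨D, mem_powersetCard.2 ⟨h, rfl⟩, hω⟩)
    fun h => ⟨D, mem_powersetCard.2 ⟨h, rfl⟩, hω⟩

section Measure

variable {n : ℕ} (p : ℝ≥0) (hp : p ≤ 1)

theorem erMeasure_allPresent (S : Finset (Sym2 (Fin n))) :
    erMeasure n p hp (allPresent S) = (p : ℝ≥0∞) ^ #S := by
  have hpi : allPresent S = Set.univ.pi fun e => if e ∈ S then {true} else Set.univ := by
    ext ω
    simp only [allPresent, Set.mem_ofPred_eq, Set.mem_pi, Set.mem_univ, true_implies]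
    refine ⟨fun h e => ?_, fun h e he => by simpa [he] using h e⟩
    split_ifs with he
    exacts [h e he, Set.mem_univ _]
  have hcoord : ∀ e : Sym2 (Fin n), (PMF.bernoulli p hp).toMeasure
      (if e ∈ S then {true} else Set.univ) = if e ∈ S then (p : ℝ≥0∞) else 1 := by
    intro e
    split_ifs
    · simp [PMF.toMeasure_apply_singleton _ _ (measurableSet_singleton _), PMF.bernoulli_apply]
    · exact measure_univ
  rw [erMeasure, hpi, Measure.pi_pi]
  simp_rw [hcoord]
  rw [prod_ite_mem, univ_inter, prod_const]

theorem erMeasure_biUnion_allPresent_le {ι : Type*} (𝒟 : Finset ι)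
    (S : ι → Finset (Sym2 (Fin n))) {k : ℕ} (hk : ∀ D ∈ 𝒟, k ≤ #(S D)) :
    erMeasure n p hp (⋃ D ∈ 𝒟, allPresent (S D)) ≤ #𝒟 * (p : ℝ≥0∞) ^ k := by
  refine (measure_biUnion_finset_le _ _).trans ?_
  rw [← nsmul_eq_mul, ← sum_const]
  refine sum_le_sum fun D hD => ?_
  rw [erMeasure_allPresent]
  exact pow_le_pow_of_le_one zero_le (by exact_mod_cast hp) (hk D hD)

theorem card_matchingsOfCard_le (m : ℕ) : #(matchingsOfCard n m) ≤ (n ^ 2) ^ m :=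
  calc _ ≤ #((univ : Finset (Sym2 (Fin n))).powersetCard m) := card_filter_le _ _
    _ = (Fintype.card (Sym2 (Fin n))).choose m := by rw [card_powersetCard, card_univ]
    _ ≤ Fintype.card (Sym2 (Fin n)) ^ m := Nat.choose_le_pow _ _
    _ ≤ (n ^ 2) ^ m := by
      gcongr
      simpa [sq] using Fintype.card_le_of_surjective _ (Sym2.mk_surjective (α := Fin n))

theorem erMeasure_cherryCover_le {A : Finset (Sym2 (Fin n))} (hA : IsMatching A) (d : ℕ) :
    erMeasure n p hp (cherryCover A d) ≤
      ((#A * n).choose d : ℕ) * (p : ℝ≥0∞) ^ (2 * d) +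
        ((#A * (2 * #A)).choose d : ℕ) * (p : ℝ≥0∞) ^ d := by
  refine (measure_union_le _ _).trans (add_le_add ?_ ?_)
  · refine (erMeasure_biUnion_allPresent_le p hp _ _ fun D hD => (mem_powersetCard.1 hD).2 ▸
      two_mul_card_le_card_cherries hA (mem_powersetCard.1 hD).1).trans ?_
    gcongr
    rw [card_powersetCard, card_product]
    exact Nat.choose_le_choose _
      (Nat.mul_le_mul_left _ ((card_le_univ _).trans_eq (Fintype.card_fin n)))
  · refine (erMeasure_biUnion_allPresent_le p hp _ _ fun D hD => (mem_powersetCard.1 hD).2 ▸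
      card_le_card_cherries hA
        fun q hq => (mem_product.1 ((mem_powersetCard.1 hD).1 hq)).1).trans ?_
    gcongr
    rw [card_powersetCard, card_product]
    exact Nat.choose_le_choose _ (Nat.mul_le_mul_left _ (card_matchingVerts_le A))

noncomputable def cherryBound (n m d : ℕ) (p : ℝ) : ℝ :=
  (n : ℝ) ^ (2 * m) * (((m * n).choose d : ℝ) * p ^ (2 * d) +
    ((m * (2 * m)).choose d : ℝ) * p ^ d)

theorem erMeasure_biUnion_cherryCover_le (m d : ℕ) :
    erMeasure n p hp (⋃ A ∈ matchingsOfCard n m, cherryCover A d) ≤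
      ENNReal.ofReal (cherryBound n m d p) := by
  refine (measure_biUnion_finset_le _ _).trans ?_
  calc ∑ A ∈ matchingsOfCard n m, erMeasure n p hp (cherryCover A d)
      ≤ ∑ _A ∈ matchingsOfCard n m, (((m * n).choose d : ℕ) * (p : ℝ≥0∞) ^ (2 * d) +
          ((m * (2 * m)).choose d : ℕ) * (p : ℝ≥0∞) ^ d) := by
        refine sum_le_sum fun A hA => ?_
        obtain ⟨hAm, hA⟩ := mem_filter.1 hA
        rw [← (mem_powersetCard.1 hAm).2]
        exact erMeasure_cherryCover_le p hp hA d
    _ ≤ ((n ^ 2) ^ m : ℕ) * (((m * n).choose d : ℕ) * (p : ℝ≥0∞) ^ (2 * d) +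
          ((m * (2 * m)).choose d : ℕ) * (p : ℝ≥0∞) ^ d) := by
        rw [sum_const, nsmul_eq_mul]
        gcongr
        exact_mod_cast card_matchingsOfCard_le m
    _ = ENNReal.ofReal (cherryBound n m d p) := by
        rw [cherryBound, ENNReal.ofReal_mul (by positivity),
          ENNReal.ofReal_add (by positivity) (by positivity), ENNReal.ofReal_mul (by positivity),
          ENNReal.ofReal_mul (by positivity)]
        simp [pow_mul, ENNReal.ofReal_pow]

end Measure

section Estimates

open Real
open scoped Nat

theorem choose_mul_pow_le (N d : ℕ) {q : ℝ} (hq : 0 ≤ q) :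
    (N.choose d : ℝ) * q ^ d ≤ (exp 1 * N * q / d) ^ d := by
  rcases d.eq_zero_or_pos with rfl | hd
  · simp
  have hfact : (d : ℝ) ^ d ≤ exp 1 ^ d * d ! := by
    rw [exp_one_pow, ← div_le_iff₀ (by positivity)]
    exact pow_div_factorial_le_exp _ (Nat.cast_nonneg d) d
  rw [div_pow, mul_pow, mul_pow, le_div_iff₀ (by positivity)]
  calc (N.choose d : ℝ) * q ^ d * d ^ d ≤ N ^ d / d ! * q ^ d * (exp 1 ^ d * d !) := by
        gcongr
        exact Nat.choose_le_pow_div d N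
    _ = exp 1 ^ d * N ^ d * q ^ d := by field_simp

theorem one_le_log_one_div {p : ℝ} (hp0 : 0 < p) (hp : p ≤ 1 / 3) : 1 ≤ log (1 / p) := by
  rw [le_log_iff_exp_le (by positivity)]
  have h3 : 3 ≤ 1 / p := by rw [le_div_iff₀ hp0]; linarith
  linarith [exp_one_lt_d9]

theorem log_one_div_sq_mul_sqrt_le {p : ℝ} (hp0 : 0 < p) (hp1 : p ≤ 1) :
    log (1 / p) ^ 2 * √p ≤ 64 * p ^ (1 / 4 : ℝ) := by
  have hL0 : 0 ≤ log (1 / p) := log_nonneg (by rw [le_div_iff₀ hp0]; linarith)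
  have hL : log (1 / p) ≤ 8 * p ^ (-(1 / 8) : ℝ) := by
    have := log_le_rpow_div (one_div_pos.2 hp0).le (by norm_num : (0 : ℝ) < 1 / 8)
    rw [one_div p, inv_rpow hp0.le, ← rpow_neg hp0.le] at this
    rw [one_div p]
    linarith
  calc log (1 / p) ^ 2 * √p ≤ (8 * p ^ (-(1 / 8) : ℝ)) ^ 2 * p ^ (1 / 2 : ℝ) := by
        rw [sqrt_eq_rpow]; gcongr
    _ = 64 * p ^ (1 / 4 : ℝ) := by
        rw [mul_pow, ← rpow_natCast (p ^ _), ← rpow_mul hp0.le, mul_assoc, ← rpow_add hp0]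
        norm_num

theorem sixteen_mul_exp_one_mul_log_sq_mul_sqrt_le {ε p : ℝ} (hε : 0 < ε) (hp0 : 0 < p)
    (hp1 : p ≤ 1) (hpε : p ≤ (ε / 3072) ^ 4) : 16 * exp 1 * log (1 / p) ^ 2 * √p ≤ ε := by
  have hroot : p ^ (1 / 4 : ℝ) ≤ ε / 3072 := by
    calc p ^ (1 / 4 : ℝ) ≤ ((ε / 3072) ^ 4) ^ ((4 : ℕ)⁻¹ : ℝ) := by
          rw [show ((4 : ℕ)⁻¹ : ℝ) = 1 / 4 by norm_num]; gcongr
      _ = ε / 3072 := pow_rpow_inv_natCast (by positivity) (by norm_num)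
  have := log_one_div_sq_mul_sqrt_le hp0 hp1
  have he : exp 1 ≤ 3 := by linarith [exp_one_lt_d9]
  calc 16 * exp 1 * log (1 / p) ^ 2 * √p = 16 * exp 1 * (log (1 / p) ^ 2 * √p) := by ring
    _ ≤ 16 * 3 * (64 * p ^ (1 / 4 : ℝ)) := by gcongr
    _ ≤ ε := by linarith

theorem choose_mul_pow_le_half_pow {N d : ℕ} {q a : ℝ} (hd : 0 < d) (hq : 0 ≤ q)
    (h : exp 1 * N * q ≤ d * (a / 2)) : (N.choose d : ℝ) * q ^ d ≤ (a / 2) ^ d :=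
  (choose_mul_pow_le N d hq).trans <|
    pow_le_pow_left₀ (by positivity) ((div_le_iff₀' (by positivity)).2 h) d

theorem half_pow_add_half_pow_le {a : ℝ} (ha : 0 ≤ a) {d : ℕ} (hd : 0 < d) :
    (a / 2) ^ d + (a / 2) ^ d ≤ a ^ d :=
  calc (a / 2) ^ d + (a / 2) ^ d = a ^ d * (2 / 2 ^ d) := by rw [div_pow]; ring
    _ ≤ a ^ d := by
        refine mul_le_of_le_one_right (by positivity) ?_
        rw [div_le_one (by positivity)]
        exact le_self_pow₀ one_le_two hd.ne'

theorem choose_terms_le_sqrt_pow {ε p : ℝ} {n m K d : ℕ} (hε : 0 < ε) (hp0 : 0 < p)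
    (hL : 1 ≤ log (1 / p)) (hsmall : 16 * exp 1 * log (1 / p) ^ 2 * √p ≤ ε)
    (hm : (m : ℝ) ≤ 2 * log (1 / p) * (n * p)) (hK : ε * (n * p) / log (1 / p) ≤ K)
    (hd : m * K ≤ 2 * d) (hd0 : 0 < d) :
    ((m * n).choose d : ℝ) * p ^ (2 * d) + ((m * (2 * m)).choose d : ℝ) * p ^ d ≤ √p ^ d := by
  set L := log (1 / p)
  set x := (n : ℝ) * p
  set a := √p
  have hLpos : 0 < L := by linarith
  have ha2 : a ^ 2 = p := sq_sqrt hp0.le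
  have hrate : 4 * exp 1 * L * p ≤ ε * a / (4 * L) := by
    rw [le_div_iff₀ (by positivity), ← ha2]
    have := mul_le_mul_of_nonneg_right hsmall (sqrt_nonneg p)
    nlinarith
  have hmx : m * x * (ε * a / (4 * L)) ≤ d * (a / 2) := by
    have hKd : (m : ℝ) * (ε * x / L) ≤ 2 * d := by
      calc (m : ℝ) * (ε * x / L) ≤ m * K := by gcongr
        _ ≤ 2 * d := by exact_mod_cast hd
    calc m * x * (ε * a / (4 * L)) = m * (ε * x / L) * a / 4 := by field_simp
      _ ≤ 2 * d * a / 4 := by gcongr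
      _ = d * (a / 2) := by ring
  have h1 : exp 1 * ((m * n : ℕ) : ℝ) * p ^ 2 ≤ d * (a / 2) := by
    calc exp 1 * ((m * n : ℕ) : ℝ) * p ^ 2 = m * x * (exp 1 * p) := by push_cast; ring
      _ ≤ m * x * (4 * exp 1 * L * p) := by gcongr; nlinarith [exp_pos 1]
      _ ≤ m * x * (ε * a / (4 * L)) := by gcongr
      _ ≤ d * (a / 2) := hmx
  have h2 : exp 1 * ((m * (2 * m) : ℕ) : ℝ) * p ≤ d * (a / 2) := by
    calc exp 1 * ((m * (2 * m) : ℕ) : ℝ) * p = 2 * exp 1 * m * p * m := by push_cast; ring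
      _ ≤ 2 * exp 1 * m * p * (2 * L * x) := by gcongr
      _ = m * x * (4 * exp 1 * L * p) := by ring
      _ ≤ m * x * (ε * a / (4 * L)) := by gcongr
      _ ≤ d * (a / 2) := hmx
  calc ((m * n).choose d : ℝ) * p ^ (2 * d) + ((m * (2 * m)).choose d : ℝ) * p ^ d
      ≤ (a / 2) ^ d + (a / 2) ^ d := by
        rw [pow_mul]
        gcongr
        exacts [choose_mul_pow_le_half_pow hd0 (by positivity) h1,
          choose_mul_pow_le_half_pow hd0 hp0.le h2]
    _ ≤ a ^ d := half_pow_add_half_pow_le (sqrt_nonneg p) hd0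

theorem pow_mul_sqrt_pow_le_exp {C ε p : ℝ} {n m K d : ℕ} (hn : 0 < n) (hp0 : 0 < p)
    (hL : 0 < log (1 / p)) (hC0 : 0 ≤ C) (hC : C ≤ ε / 16) (hlogn : log n ≤ C * (n * p))
    (hm : log (1 / p) * (n * p) ≤ m) (hK : ε * (n * p) / log (1 / p) ≤ K) (hd : m * K ≤ 2 * d) :
    (n : ℝ) ^ (2 * m) * √p ^ d ≤ exp (-C * n ^ 2 * p ^ 2 * log (1 / p)) := by
  set L := log (1 / p)
  set x := (n : ℝ) * p
  have hx : 0 < x := by positivity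
  have hε : 0 ≤ ε := by linarith
  have hdL : m * ε * x / 4 ≤ d * L / 2 := by
    have hKL : ε * x ≤ K * L := by rwa [div_le_iff₀ hL] at hK
    have hd' : (m : ℝ) * K ≤ 2 * d := by exact_mod_cast hd
    nlinarith [Nat.cast_nonneg (α := ℝ) m]
  have h1 : 2 * m * log n ≤ m * ε * x / 8 := by
    have := mul_le_mul_of_nonneg_left (hlogn.trans (mul_le_mul_of_nonneg_right hC hx.le))
      (Nat.cast_nonneg (α := ℝ) m)
    linarith
  have h2 : C * x ^ 2 * L ≤ m * ε * x / 16 := by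
    calc C * x ^ 2 * L = C * x * (L * x) := by ring
      _ ≤ ε / 16 * x * m := by gcongr
      _ = m * ε * x / 16 := by ring
  have hsqrt : √p = exp (-L / 2) := by
    have hLp : L = -log p := by simp only [L, one_div, log_inv]
    rw [← exp_log (sqrt_pos.2 hp0), log_sqrt hp0.le, hLp, neg_neg]
  calc (n : ℝ) ^ (2 * m) * √p ^ d = exp (2 * m * log n - d * L / 2) := by
        rw [hsqrt, ← exp_nat_mul, ← exp_log (Nat.cast_pos.2 hn : (0 : ℝ) < n), ← exp_nat_mul,
          ← exp_add, log_exp]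
        push_cast; ring_nf
    _ ≤ exp (-C * n ^ 2 * p ^ 2 * L) := by
        rw [show -C * (n : ℝ) ^ 2 * p ^ 2 * L = -(C * x ^ 2 * L) by ring]
        gcongr
        linarith [show 0 ≤ (m : ℝ) * ε * x by positivity]

theorem Nat.floor_add_one_le_two_mul {y : ℝ} (hy : 1 ≤ y) : (⌊y⌋₊ + 1 : ℝ) ≤ 2 * y := by
  linarith [Nat.floor_le (by linarith : 0 ≤ y)]

/-- `ε / 16` pays for the union bound over matchings and for the target exponent, `1 / 3` forces
`log (1/p) ≥ 1`, and `(ε / 3072) ^ 4` forces `16 e log (1/p) ^ 2 √p ≤ ε`. -/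
noncomputable def tailConst (ε : ℝ) : ℝ := min (ε / 16) (min (1 / 3) ((ε / 3072) ^ 4))

theorem tailConst_pos {ε : ℝ} (hε : 0 < ε) : 0 < tailConst ε := by
  unfold tailConst
  positivity

theorem tailConst_le_div_sixteen (ε : ℝ) : tailConst ε ≤ ε / 16 := min_le_left _ _

theorem tailConst_le_one_div_three (ε : ℝ) : tailConst ε ≤ 1 / 3 :=
  (min_le_right _ _).trans (min_le_left _ _)

theorem tailConst_le_pow_four (ε : ℝ) : tailConst ε ≤ (ε / 3072) ^ 4 :=
  (min_le_right _ _).trans (min_le_right _ _)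

theorem cherryBound_le_exp {ε p : ℝ} {n m K d : ℕ} (hε : 0 < ε) (hn : 2 ≤ n) (hp1 : p ≤ 1)
    (hlow : (tailConst ε)⁻¹ * log n / n ≤ p) (hhigh : p ≤ tailConst ε)
    (hm : m = ⌊log (1 / p) * n * p⌋₊ + 1) (hK : K = ⌈ε * (1 / log (1 / p)) * n * p⌉₊)
    (hd : d = (m * K + 1) / 2) :
    cherryBound n m d p ≤ exp (-tailConst ε * n ^ 2 * p ^ 2 * log (1 / p)) := by
  set C := tailConst ε
  set L := log (1 / p)
  set x := (n : ℝ) * p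
  have hC0 : 0 < C := tailConst_pos hε
  have hn0 : (0 : ℝ) < n := by positivity
  have hlog2 : log 2 ≤ log n := log_le_log (by norm_num) (by exact_mod_cast hn)
  have hp0 : 0 < p :=
    lt_of_lt_of_le (div_pos (mul_pos (inv_pos.2 hC0) (by linarith [log_two_gt_d9])) hn0) hlow
  have hL1 : 1 ≤ L := one_le_log_one_div hp0 (hhigh.trans (tailConst_le_one_div_three ε))
  have hlogn : log n ≤ C * x := by
    rwa [div_le_iff₀ hn0, inv_mul_le_iff₀ hC0, mul_comm p] at hlow
  have hx1 : 1 ≤ x := by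
    have := mul_le_mul_of_nonneg_right (tailConst_le_one_div_three ε) (by positivity : 0 ≤ x)
    linarith [log_two_gt_d9]
  have hm_lo : L * x ≤ m := by
    rw [hm, mul_assoc]; push_cast; exact (Nat.lt_floor_add_one _).le
  have hm_hi : (m : ℝ) ≤ 2 * L * x := by
    rw [hm, mul_assoc, mul_assoc]; push_cast
    exact Nat.floor_add_one_le_two_mul (one_le_mul_of_one_le_of_one_le hL1 hx1)
  have hK' : ε * x / L ≤ K := by
    rw [hK]; exact (le_of_eq (by ring)).trans (Nat.le_ceil _)
  have hK0 : 0 < K := by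
    rw [hK, Nat.ceil_pos, show ε * (1 / L) * n * p = ε * x / L by ring]
    exact div_pos (by positivity) (by linarith)
  have hmK : m * K ≤ 2 * d := by omega
  have hd0 : 0 < d := by
    have : 0 < m * K := Nat.mul_pos (by omega) hK0
    omega
  calc _ ≤ (n : ℝ) ^ (2 * m) * √p ^ d := by
        unfold cherryBound
        gcongr
        exact choose_terms_le_sqrt_pow hε hp0 hL1
          (sixteen_mul_exp_one_mul_log_sq_mul_sqrt_le hε hp0 hp1
            (hhigh.trans (tailConst_le_pow_four ε)))
          hm_hi hK' hmK hd0
    _ ≤ _ := pow_mul_sqrt_pow_le_exp (by omega) hp0 (by linarith) hC0.le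
        (tailConst_le_div_sixteen ε) hlogn hm_lo hK' hmK

end Estimates

/-- **Lemma 5.2, bound for `E₁`**: with high probability there is no matching of more than
`L n p` bad edges, where `L = log(1/p)`. -/
theorem E1_tail (ε : ℝ) (hε : 0 < ε) :
    ∃ C : ℝ, 0 < C ∧ ∀ (n : ℕ) (p : ℝ≥0) (hp : p ≤ 1),
      C⁻¹ * Real.log n / n ≤ (p : ℝ) → (p : ℝ) ≤ C →
      erMeasure n p hp
          {ω | ∃ A : Finset (Sym2 (Fin n)), IsMatching A ∧
                Real.log (1 / (p : ℝ)) * n * (p : ℝ) < (A.card : ℝ) ∧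
                ∀ e ∈ A, BadEdge ε (p : ℝ) ω e}
        ≤ ENNReal.ofReal
            (Real.exp (-C * (n : ℝ) ^ 2 * (p : ℝ) ^ 2 * Real.log (1 / (p : ℝ)))) := by
  refine ⟨tailConst ε, tailConst_pos hε, fun n p hp hlow hhigh => ?_⟩
  have hLnp : 0 ≤ Real.log (1 / (p : ℝ)) * n * p := by
    have : 0 ≤ Real.log (1 / (p : ℝ)) := by
      rw [one_div, Real.log_inv, neg_nonneg]
      exact Real.log_nonpos p.coe_nonneg (by exact_mod_cast hp)
    positivity
  rcases lt_or_ge n 2 with hn | hn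
  · refine (measure_mono (t := ∅) ?_).trans (by simp)
    rintro ω ⟨A, hA, hcard, -⟩
    rw [hA.eq_empty_of_lt_two hn, card_empty, Nat.cast_zero] at hcard
    exact hLnp.not_gt hcard
  set m := ⌊Real.log (1 / (p : ℝ)) * n * p⌋₊ + 1
  set K := ⌈ε * (1 / Real.log (1 / (p : ℝ))) * n * p⌉₊
  calc _ ≤ erMeasure n p hp (⋃ A ∈ matchingsOfCard n m, cherryCover A ((m * K + 1) / 2)) :=
        measure_mono <| by
          rintro ω ⟨A, hA, hcard, hbad⟩
          exact mem_biUnion_cherryCover (K := K) ω hA ((Nat.floor_lt hLnp).2 hcard)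
            (fun e he => (hbad e he).ceil_le_commonNbrs ω) (by omega)
    _ ≤ _ := erMeasure_biUnion_cherryCover_le p hp m _
    _ ≤ _ := ENNReal.ofReal_le_ofReal
        (cherryBound_le_exp hε hn (by exact_mod_cast hp) hlow hhigh rfl rfl rfl)
end

section
/- In the Erdős–Rényi random graph $G(n,p)$, let $d_u$ denote the degree of vertex $u$ and for a set of vertices $A$ let $d(A) := \sum_{u \in A} d_u$. Then for any nonempty set of vertices $A$ and any $t > 0$, $\mathbb{P}(d(A) \ge t) \le \exp\big(-\frac{t}{2}\log\frac{t}{6n|A|p}\big)$. -/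
open MeasureTheory ProbabilityTheory Real
open scoped Classical ENNReal NNReal

/-!
The degree sum counts every edge `e` of the graph `w e` times, where `w e ≤ 2` is the number of
endpoints of `e` in `A` and `∑ e, w e ≤ n |A|`, so it is a weighted sum of independent
Bernoulli(p) variables. By convexity of `exp`, each weight contributes at most
`exp (p (w e / 2) (e^{2λ} - 1))` to the moment generating function, and the Chernoff bound with
`e^{2λ} = t / (n |A| p)` gives `exp (t / 2 - (t / 2) log (t / (n |A| p)))`; since `log 6 ≥ 1`
this is at most the claimed bound. For `t ≤ 6 n |A| p` the bound is at least `1`.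
-/

set_option linter.deprecated false

open Finset

lemma exp_mul_sub_one_le {c b : ℝ} (hc : 0 ≤ c) (hcb : c ≤ b) (l : ℝ) :
    exp (l * c) - 1 ≤ c / b * (exp (l * b) - 1) := by
  rcases hc.eq_or_lt with rfl | hc
  · simp
  have hb : 0 < b := hc.trans_le hcb
  have h := convexOn_exp.2 (Set.mem_univ 0) (Set.mem_univ (l * b))
    (sub_nonneg.2 ((div_le_one hb).2 hcb)) (div_nonneg hc.le hb.le) (sub_add_cancel 1 (c / b))
  simp only [smul_eq_mul, mul_zero, zero_add, exp_zero, mul_one] at h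
  rw [show c / b * (l * b) = l * c by field_simp] at h
  linarith

lemma chernoff_exponent_le {t m : ℝ} (ht : 0 < t) (hm : 0 < m) :
    -(log (t / m) / 2) * t + m / 2 * (t / m - 1) ≤ -(t / 2) * log (t / (6 * m)) := by
  have h6 : 1 ≤ log 6 := by
    rw [le_log_iff_exp_le (by norm_num)]
    exact exp_one_lt_d9.le.trans (by norm_num)
  have hlog : log (t / (6 * m)) = log (t / m) - log 6 := by
    rw [← log_div (by positivity) (by norm_num), div_div, mul_comm]
  have hmt : m / 2 * (t / m - 1) = t / 2 - m / 2 := by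
    field_simp
  rw [hlog, hmt]
  nlinarith

section WeightedBernoulli

variable (p : ℝ≥0) (hp : p ≤ 1)

lemma integral_bernoulli_toMeasure (f : Bool → ℝ) :
    ∫ x, f x ∂(PMF.bernoulli p hp).toMeasure = p * f true + (1 - p) * f false := by
  rw [PMF.integral_eq_sum, Fintype.sum_bool]
  simp [PMF.bernoulli_apply, ENNReal.toReal_sub_of_le (ENNReal.coe_le_one_iff.2 hp)]

lemma mgf_bernoulli_mul_le {c b : ℝ} (hc : 0 ≤ c) (hcb : c ≤ b) (l : ℝ) :
    mgf (fun x : Bool => c * x.toNat) (PMF.bernoulli p hp).toMeasure l ≤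
      exp (p * (c / b) * (exp (l * b) - 1)) := by
  rw [mgf, integral_bernoulli_toMeasure]
  simp only [Bool.toNat_true, Bool.toNat_false, Nat.cast_one, Nat.cast_zero, mul_one, mul_zero,
    exp_zero]
  calc (p : ℝ) * exp (l * c) + (1 - p) = 1 + p * (exp (l * c) - 1) := by ring
    _ ≤ 1 + p * (c / b * (exp (l * b) - 1)) := by
      gcongr; exact exp_mul_sub_one_le hc hcb l
    _ ≤ _ := by rw [← mul_assoc]; linarith [add_one_le_exp (p * (c / b) * (exp (l * b) - 1))]

variable {ι : Type*} [Fintype ι]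

theorem measureReal_weighted_sum_ge_le_exp (c : ι → ℝ) {b : ℝ} (hc : ∀ i, 0 ≤ c i)
    (hcb : ∀ i, c i ≤ b) {l : ℝ} (hl : 0 ≤ l) (t : ℝ) :
    (Measure.pi fun _ : ι => (PMF.bernoulli p hp).toMeasure).real
        {ω | t ≤ ∑ i, c i * (ω i).toNat} ≤
      exp (-l * t + p * (∑ i, c i) / b * (exp (l * b) - 1)) := by
  set μ := Measure.pi fun _ : ι => (PMF.bernoulli p hp).toMeasure
  set X : ι → (ι → Bool) → ℝ := fun i ω => c i * (ω i).toNat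
  have hX : ∀ i, Measurable (X i) := fun i => by fun_prop
  have hindep : iIndepFun X μ :=
    iIndepFun_pi (X := fun i (x : Bool) => c i * x.toNat) fun i => by fun_prop
  have hmgf : ∀ i, mgf (X i) μ l ≤ exp (p * (c i / b) * (exp (l * b) - 1)) := fun i => by
    refine le_of_eq_of_le ?_ (mgf_bernoulli_mul_le p hp (hc i) (hcb i) l)
    exact integral_comp_eval (μ := fun _ : ι => (PMF.bernoulli p hp).toMeasure)
      (f := fun x : Bool => exp (l * (c i * x.toNat)))
      (measurable_of_countable _).aestronglyMeasurable
  have hS : {ω | t ≤ ∑ i, c i * (ω i).toNat} = {ω | t ≤ (∑ i, X i) ω} := by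
    simp [X, Finset.sum_apply]
  calc μ.real {ω | t ≤ ∑ i, c i * (ω i).toNat}
      ≤ exp (-l * t) * mgf (∑ i, X i) μ l := by
        rw [hS]
        exact measure_ge_le_exp_mul_mgf t hl
          (hindep.integrable_exp_mul_sum hX fun i _ => .of_finite)
    _ = exp (-l * t) * ∏ i, mgf (X i) μ l := by rw [hindep.mgf_sum hX]
    _ ≤ exp (-l * t) * ∏ i, exp (p * (c i / b) * (exp (l * b) - 1)) := by
        gcongr with i; exacts [fun i _ => mgf_nonneg, hmgf i]
    _ = _ := by
        rw [← exp_sum, ← exp_add]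
        simp only [Finset.mul_sum, Finset.sum_div, Finset.sum_mul, mul_div_assoc]

theorem measure_weighted_sum_ge_le_exp_log (c : ι → ℝ) (hc : ∀ i, 0 ≤ c i)
    (hc2 : ∀ i, c i ≤ 2) {M : ℝ} (hM : ∑ i, c i ≤ M) {t : ℝ} (ht : 0 < t) :
    Measure.pi (fun _ : ι => (PMF.bernoulli p hp).toMeasure)
        {ω | t ≤ ∑ i, c i * (ω i).toNat} ≤
      ENNReal.ofReal (exp (-(t / 2) * log (t / (6 * M * p)))) := by
  rw [mul_assoc]
  set m := M * (p : ℝ) with hm_def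
  have hm : 0 ≤ m := mul_nonneg ((Finset.sum_nonneg fun i _ => hc i).trans hM) p.2
  rcases hm.eq_or_lt with hm0 | hm
  · rw [← hm0]
    simpa using prob_le_one
  by_cases hsmall : t ≤ 6 * m
  · have hlog : log (t / (6 * m)) ≤ 0 :=
      log_nonpos (by positivity) ((div_le_one (by positivity)).2 hsmall)
    refine prob_le_one.trans ?_
    rw [ENNReal.one_le_ofReal, one_le_exp_iff]
    nlinarith
  have htm : 1 ≤ t / m := (one_le_div hm).2 (by linarith)
  have hl : 0 ≤ log (t / m) / 2 := div_nonneg (log_nonneg htm) zero_le_two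
  have hexp : exp (log (t / m) / 2 * 2) = t / m := by
    rw [div_mul_cancel₀ _ two_ne_zero, exp_log (by positivity)]
  rw [← ofReal_measureReal]
  refine ENNReal.ofReal_le_ofReal
    ((measureReal_weighted_sum_ge_le_exp p hp c hc hc2 hl t).trans ?_)
  rw [exp_le_exp, hexp]
  refine le_trans ?_ (chernoff_exponent_le ht hm)
  have hsum : (p : ℝ) * (∑ i, c i) / 2 ≤ m / 2 := by
    rw [hm_def, mul_comm M]
    gcongr
  nlinarith [mul_le_mul_of_nonneg_right hsum (sub_nonneg.2 htm)]

end WeightedBernoulli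

section EdgeWeight

variable {V : Type*} [Fintype V] [DecidableEq V]

def edgeWeight (A : Finset V) (e : Sym2 V) : ℕ :=
  #{q ∈ A ×ˢ univ | q.1 ≠ q.2 ∧ s(q.1, q.2) = e}

lemma edgeWeight_le_two (A : Finset V) (e : Sym2 V) : edgeWeight A e ≤ 2 := by
  induction e using Sym2.ind with
  | _ a b =>
    calc edgeWeight A s(a, b) ≤ #{(a, b), (b, a)} := by
          refine card_le_card fun q hq => ?_
          rw [mem_filter, Sym2.eq_iff] at hq
          rcases hq.2.2 with ⟨rfl, rfl⟩ | ⟨rfl, rfl⟩ <;> simp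
      _ ≤ 2 := card_le_two

lemma sum_edgeWeight_le (A : Finset V) : ∑ e, edgeWeight A e ≤ #A * Fintype.card V := by
  calc ∑ e, edgeWeight A e = #{q ∈ A ×ˢ univ | q.1 ≠ q.2} := by
        rw [card_eq_sum_card_fiberwise (f := fun q : _ × _ => s(q.1, q.2)) (t := univ)
          fun _ _ => mem_coe.2 (mem_univ _)]
        simp only [edgeWeight, filter_filter]
    _ ≤ #(A ×ˢ (univ : Finset V)) := card_filter_le _ _
    _ = #A * Fintype.card V := by rw [card_product, card_univ]

end EdgeWeight

lemma sum_deg_eq_sum_edgeWeight {n : ℕ} (ω : Sym2 (Fin n) → Bool) (A : Finset (Fin n)) :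
    ∑ u ∈ A, deg ω u = ∑ e, edgeWeight A e * (ω e).toNat := by
  have hdarts :
      ∑ u ∈ A, deg ω u = #{q ∈ A ×ˢ univ | q.1 ≠ q.2 ∧ ω s(q.1, q.2) = true} := by
    rw [card_filter, sum_product]
    refine sum_congr rfl fun u _ => ?_
    rw [deg, card_filter]
    exact sum_congr rfl fun v _ => if_congr Iff.rfl rfl rfl
  rw [hdarts, card_eq_sum_card_fiberwise (f := fun q : _ × _ => s(q.1, q.2)) (t := univ)
    fun _ _ => mem_coe.2 (mem_univ _)]
  refine sum_congr rfl fun e _ => ?_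
  rw [filter_filter, edgeWeight]
  cases hω : ω e
  · simp only [Bool.toNat_false, mul_zero, card_eq_zero, filter_eq_empty_iff]
    rintro q - ⟨⟨-, hq⟩, rfl⟩
    simp [hω] at hq
  · simp only [Bool.toNat_true, mul_one]
    congr 1
    refine filter_congr fun q _ => ?_
    constructor
    · rintro ⟨⟨hne, -⟩, he⟩; exact ⟨hne, he⟩
    · rintro ⟨hne, rfl⟩; exact ⟨⟨hne, hω⟩, rfl⟩

theorem degree_sum_tail_general (n : ℕ) (p : ℝ≥0) (hp : p ≤ 1) (A : Finset (Fin n))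
    (t : ℝ) (ht : 0 < t) :
    erMeasure n p hp {ω | t ≤ ((∑ u ∈ A, deg ω u : ℕ) : ℝ)} ≤
      ENNReal.ofReal
        (Real.exp (-(t / 2) * Real.log (t / (6 * n * A.card * (p : ℝ))))) := by
  have hdeg : ∀ ω,
      ((∑ u ∈ A, deg ω u : ℕ) : ℝ) = ∑ e, (edgeWeight A e : ℝ) * (ω e).toNat := fun ω => by rw [sum_deg_eq_sum_edgeWeight]; push_cast; rfl
  have hweight : ∑ e, (edgeWeight A e : ℝ) ≤ n * #A := by
    have := sum_edgeWeight_le A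
    rw [Fintype.card_fin, mul_comm] at this
    exact_mod_cast this
  simp only [hdeg]
  rw [mul_assoc 6 (n : ℝ)]
  exact measure_weighted_sum_ge_le_exp_log p hp _ (fun _ => Nat.cast_nonneg _)
    (fun e => by exact_mod_cast edgeWeight_le_two A e) hweight ht

/-- **Lemma 6.2**: tail bound for the sum of degrees over a set of vertices. -/
theorem degree_sum_tail (n : ℕ) (p : ℝ≥0) (hp : p ≤ 1) (A : Finset (Fin n))
    (hA : A.Nonempty) (t : ℝ) (ht : 0 < t) :
    erMeasure n p hp {ω | t ≤ ((∑ u ∈ A, deg ω u : ℕ) : ℝ)} ≤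
      ENNReal.ofReal
        (Real.exp (-(t / 2) * Real.log (t / (6 * n * A.card * (p : ℝ))))) :=
  degree_sum_tail_general n p hp A t ht
end
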